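/- For real u > κ := (1/2)·arccosh(3/2), with φ(u) := arccosh(cosh(2u) − 1/2), the identity (e^{φ(u)} − e^{−2u})/(1 − e^{φ(u)−2u}) = e^{φ(u)+2u} + e^{−φ(u)−2u} − 2 holds, and moreover this common value equals cosh(4u) − cosh(2u) − 1 + sinh(2u)·√((2·cosh(2u)+1)(2·cosh(2u)−3)) = ℓ(u). -/
import Mathlib


noncomputable def arcosh (x : ℝ) : ℝ := Real.log (x + Real.sqrt (x^2 - 1))

noncomputable def kappa : ℝ := arcosh (3/2) / 2

noncomputable def phi (ξ : ℝ) : ℝ := arcosh (Real.cosh (2*ξ) - 1/2)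

noncomputable def ell (u : ℝ) : ℝ :=
  Real.cosh (4*u) - Real.cosh (2*u) - 1 +
    Real.sinh (2*u) * Real.sqrt ((2*Real.cosh (2*u)+1) * (2*Real.cosh (2*u)-3))

lemma exp_arcosh {x : ℝ} (hx : 1 ≤ x) :
    Real.exp (arcosh x) = x + Real.sqrt (x^2 - 1) := by
  have hs : 0 ≤ Real.sqrt (x^2 - 1) := Real.sqrt_nonneg _
  exact Real.exp_log (by nlinarith)

lemma exp_neg_arcosh {x : ℝ} (hx : 1 ≤ x) :
    Real.exp (-arcosh x) = x - Real.sqrt (x^2 - 1) := by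
  rw [Real.exp_neg, exp_arcosh hx]
  have hsq : Real.sqrt (x^2 - 1) ^ 2 = x^2 - 1 := Real.sq_sqrt (by nlinarith)
  have hmul : (x - Real.sqrt (x^2 - 1)) * (x + Real.sqrt (x^2 - 1)) = 1 := by nlinarith
  exact inv_eq_of_mul_eq_one_left hmul

lemma cosh_arcosh {x : ℝ} (hx : 1 ≤ x) : Real.cosh (arcosh x) = x := by
  rw [Real.cosh_eq, exp_arcosh hx, exp_neg_arcosh hx]; ring

theorem stmt14 (u : ℝ) (hu : kappa < u) :
    (Real.exp (phi u) - Real.exp (-(2*u))) / (1 - Real.exp (phi u - 2*u)) =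
      Real.exp (phi u + 2*u) + Real.exp (-phi u - 2*u) - 2 ∧
    Real.exp (phi u + 2*u) + Real.exp (-phi u - 2*u) - 2 = ell u := by
  have hk0 : 0 < kappa := by
    have : 0 < arcosh (3/2) := by
      unfold arcosh
      apply Real.log_pos
      have := Real.sqrt_nonneg ((3/2:ℝ)^2 - 1)
      linarith
    unfold kappa; linarith
  have hu0 : 0 < u := hk0.trans hu
  set c := Real.cosh (2*u) with hc
  set s := Real.sinh (2*u) with hsdef
  have hck : Real.cosh (2*kappa) = 3/2 := by
    have : 2 * kappa = arcosh (3/2) := by unfold kappa; ring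
    rw [this, cosh_arcosh (by norm_num)]
  have hc32 : 3/2 < c := by
    rw [← hck, hc, Real.cosh_lt_cosh, abs_of_pos (by linarith), abs_of_pos (by linarith)]
    linarith
  have hs2 : s^2 = c^2 - 1 := by
    have := Real.cosh_sq_sub_sinh_sq (2*u); nlinarith
  have hs0 : 0 < s := by rw [hsdef]; exact Real.sinh_pos_iff.mpr (by linarith)
  set r := Real.sqrt ((2*c+1) * (2*c-3)) with hrdef
  have hr0 : 0 ≤ r := Real.sqrt_nonneg _
  have hr2 : r^2 = (2*c+1) * (2*c-3) := Real.sq_sqrt (by nlinarith)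
  have hx1 : (1:ℝ) ≤ c - 1/2 := by linarith
  have hsqrt : Real.sqrt ((c - 1/2)^2 - 1) = r/2 := by
    rw [show (c - 1/2)^2 - 1 = (r/2)^2 by nlinarith]
    exact Real.sqrt_sq (by positivity)
  have hA : Real.exp (phi u) = (c - 1/2) + r/2 := by
    rw [phi, ← hc, exp_arcosh hx1, hsqrt]
  have hB : Real.exp (-phi u) = (c - 1/2) - r/2 := by
    rw [phi, ← hc, exp_neg_arcosh hx1, hsqrt]
  have hE : Real.exp (2*u) = c + s := by
    rw [hc, hsdef]; exact (Real.cosh_add_sinh (2*u)).symm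
  have hF : Real.exp (-(2*u)) = c - s := by
    rw [hc, hsdef]; exact (Real.cosh_sub_sinh (2*u)).symm
  have hφlt : phi u < 2*u := by
    have h1 : Real.exp (phi u) < Real.exp (2*u) := by
      rw [hA, hE]
      nlinarith [hr2, hs2, hr0, hs0]
    exact Real.exp_lt_exp.mp h1
  have hden : Real.exp (phi u - 2*u) < 1 := by
    rw [← Real.exp_zero]
    exact Real.exp_lt_exp.mpr (by linarith)
  have hden0 : 1 - Real.exp (phi u - 2*u) ≠ 0 := by linarith
  have hAE : Real.exp (phi u + 2*u) = ((c - 1/2) + r/2) * (c + s) := by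
    rw [Real.exp_add, hA, hE]
  have hBF : Real.exp (-phi u - 2*u) = ((c - 1/2) - r/2) * (c - s) := by
    rw [show -phi u - 2*u = -phi u + -(2*u) by ring, Real.exp_add, hB, hF]
  have hAF : Real.exp (phi u - 2*u) = ((c - 1/2) + r/2) * (c - s) := by
    rw [show phi u - 2*u = phi u + -(2*u) by ring, Real.exp_add, hA, hF]
  constructor
  · rw [div_eq_iff hden0, hA, hF, hAE, hBF, hAF]
    linear_combination (-c*r + r/2 - r^2/2) * hs2 + (c*s/2 - c^2/2 + 1/2) * hr2
  · rw [hAE, hBF, ell, show (4:ℝ)*u = 2*(2*u) by ring, Real.cosh_two_mul, ← hc, ← hsdef,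
      ← hrdef]
    linear_combination -hs2
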